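/- arXiv:math/0701933 — 4 statements merged into one kernel-verified Lean document; each statement's English description precedes it below -/
import Mathlib

section
/- The kernel k(v,v') = C |v-v'|^{-1} exp{ -(m₁/(8θ₁)) ( (1+μ)|v-v'| + (|v-u₁|² - |v'-u₁|²)/|v-v'| )² } satisfies the detailed balance law k(v,v') exp{-(m₁/(2θ₁))(1+μ)|v'-u₁|²} = k(v',v) exp{-(m₁/(2θ₁))(1+μ)|v-u₁|²} for all distinct v, v' in ℝ³. -/
open MeasureTheory Real

noncomputable section

/-- Detailed balance law for the dissipative hard-spheres kernel. -/
theorem detailed_balance_law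
    (m₁ θ₁ μ : ℝ) (hm₁ : 0 < m₁) (hθ₁ : 0 < θ₁) (hμ : 0 < μ)
    (u₁ : EuclideanSpace ℝ (Fin 3))
    (C : ℝ) (hC : C = Real.sqrt (m₁ / (2 * Real.pi * θ₁)))
    (k : EuclideanSpace ℝ (Fin 3) → EuclideanSpace ℝ (Fin 3) → ℝ)
    (hk : ∀ v v' : EuclideanSpace ℝ (Fin 3), v ≠ v' →
      k v v' = C * ‖v - v'‖⁻¹ *
        Real.exp (-(m₁ / (8 * θ₁)) *
          ((1 + μ) * ‖v - v'‖ + (‖v - u₁‖ ^ 2 - ‖v' - u₁‖ ^ 2) / ‖v - v'‖) ^ 2)) :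
    ∀ v v' : EuclideanSpace ℝ (Fin 3), v ≠ v' →
      k v v' * Real.exp (-(m₁ / (2 * θ₁)) * (1 + μ) * ‖v' - u₁‖ ^ 2)
        = k v' v * Real.exp (-(m₁ / (2 * θ₁)) * (1 + μ) * ‖v - u₁‖ ^ 2) := by
  intro v v' hvv'
  have hne : ‖v - v'‖ ≠ 0 := norm_ne_zero_iff.mpr (sub_ne_zero.mpr hvv')
  have hsym : ‖v' - v‖ = ‖v - v'‖ := norm_sub_rev v' v
  rw [hk v v' hvv', hk v' v (Ne.symm hvv'), hsym]
  have hexp : -(m₁ / (8 * θ₁)) *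
        ((1 + μ) * ‖v - v'‖ + (‖v - u₁‖ ^ 2 - ‖v' - u₁‖ ^ 2) / ‖v - v'‖) ^ 2 +
        -(m₁ / (2 * θ₁)) * ((1 + μ) * ‖v' - u₁‖ ^ 2)
      = -(m₁ / (8 * θ₁)) *
        ((1 + μ) * ‖v - v'‖ + (‖v' - u₁‖ ^ 2 - ‖v - u₁‖ ^ 2) / ‖v - v'‖) ^ 2 +
        -(m₁ / (2 * θ₁)) * (1 + μ) * ‖v - u₁‖ ^ 2 := by
    field_simp
    ring
  rw [mul_assoc, mul_assoc, ← Real.exp_add, mul_assoc, mul_assoc, ← Real.exp_add, hexp, ← mul_assoc]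
end
end

section
/- The function C(v) := ∫_{ℝ³} G(v,v') dv' is uniformly bounded in v: sup_{v∈ℝ³} ∫_{ℝ³} G(v,v') dv' < ∞, where G is the symmetric Gaussian-type kernel G(v,v') = C₀|v-v'|^{-1} exp{-(m₁/(8θ₁))((1+μ)²|v-v'|² + (|v-u₁|²-|v'-u₁|²)²/|v-v'|²)}. -/
open MeasureTheory Real Classical

/-!
Dropping the nonnegative second term of the exponent gives
`G v v' ≤ C₀ ‖v - v'‖⁻¹ exp (-(m₁ / (8 θ₁)) (1 + μ)² ‖v - v'‖²)`, a translate of a single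
function that is integrable on `ℝ³` (the singularity `‖x‖⁻¹` is integrable in dimension 3).
Hence every row integral is bounded by the integral of that function.
-/

noncomputable section

/-- In polar coordinates the integrand becomes `r ^ (s + n - 1) * exp (-b r²)` on `(0, ∞)`. -/
theorem integrable_norm_rpow_mul_exp_neg_mul_sq {E : Type*} [NormedAddCommGroup E]
    [NormedSpace ℝ E] [Nontrivial E] [FiniteDimensional ℝ E] [MeasurableSpace E] [BorelSpace E]
    (μ : Measure E) [μ.IsAddHaarMeasure] {b s : ℝ} (hb : 0 < b)
    (hs : -(Module.finrank ℝ E : ℝ) < s) :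
    Integrable (fun x : E => ‖x‖ ^ s * exp (-b * ‖x‖ ^ 2)) μ := by
  rw [integrable_fun_norm_addHaar μ (f := fun r => r ^ s * exp (-b * r ^ 2))]
  have hdim : 1 ≤ Module.finrank ℝ E := Module.finrank_pos
  refine (integrableOn_rpow_mul_exp_neg_mul_sq hb (s := s + (Module.finrank ℝ E - 1 : ℕ))
    (by push_cast [hdim]; linarith)).congr_fun (fun r (hr : 0 < r) => ?_) measurableSet_Ioi
  dsimp only
  rw [smul_eq_mul, ← mul_assoc, rpow_add hr, rpow_natCast, mul_comm (r ^ s)]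

/-- Uniform boundedness of `v ↦ ∫ G(v,v') dv'` for the symmetric
Gaussian-type kernel `G`. -/
theorem symmetrized_kernel_row_integral_bounded
    (m₁ θ₁ μ : ℝ) (hm₁ : 0 < m₁) (hθ₁ : 0 < θ₁) (hμ : 0 < μ)
    (u₁ : EuclideanSpace ℝ (Fin 3))
    (G : EuclideanSpace ℝ (Fin 3) → EuclideanSpace ℝ (Fin 3) → ℝ)
    (hG : ∀ v v' : EuclideanSpace ℝ (Fin 3),
      G v v' = if v = v' then 0 else
        Real.sqrt (m₁ / (2 * Real.pi * θ₁)) * ‖v - v'‖⁻¹ *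
          Real.exp (-(m₁ / (8 * θ₁)) *
            ((1 + μ) ^ 2 * ‖v - v'‖ ^ 2
              + (‖v - u₁‖ ^ 2 - ‖v' - u₁‖ ^ 2) ^ 2 / ‖v - v'‖ ^ 2))) :
    ∃ B : ℝ, ∀ v : EuclideanSpace ℝ (Fin 3), ∫ v', G v v' ≤ B := by
  set k := m₁ / (8 * θ₁)
  set H : EuclideanSpace ℝ (Fin 3) → ℝ := fun x =>
    Real.sqrt (m₁ / (2 * Real.pi * θ₁)) * (‖x‖ ^ (-1 : ℝ) * exp (-(k * (1 + μ) ^ 2) * ‖x‖ ^ 2))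
  have hH : Integrable H :=
    (integrable_norm_rpow_mul_exp_neg_mul_sq volume (by positivity) (by simp)).const_mul _
  have hG_le : ∀ v v', G v v' ≤ H (v - v') := by
    intro v v'
    rw [hG]
    split_ifs
    · positivity
    · simp only [H, rpow_neg_one, mul_assoc]
      gcongr _ * (_ * exp ?_)
      nlinarith [show 0 < k by positivity,
        show 0 ≤ (‖v - u₁‖ ^ 2 - ‖v' - u₁‖ ^ 2) ^ 2 / ‖v - v'‖ ^ 2 by positivity]
  have hG_nonneg : ∀ v v', 0 ≤ G v v' := fun v v' => by rw [hG]; split_ifs <;> positivity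
  refine ⟨∫ x, H x, fun v => ?_⟩
  calc ∫ v', G v v' ≤ ∫ v', H (v - v') :=
        integral_mono_of_nonneg (.of_forall (hG_nonneg v)) (hH.comp_sub_left v)
          (.of_forall (hG_le v))
    _ = ∫ x, H x := integral_sub_left_eq_self H volume v
end
end

section
/- There exist positive constants ν₀, ν₁ such that ν₀(1+|v-u₁|) ≤ σ(v) ≤ ν₁(1+|v-u₁|) for all v ∈ ℝ³, where σ(v) is given by the explicit formula σ(v) = (2π/(2+μ)²)√(m₁/(2πθ₁))·[(4θ₁/m₁)exp(-(m₁/(2θ₁))r²) + (2r + 2θ₁/(m₁r))∫₀^{2r}exp(-(m₁/(8θ₁))t²)dt], with r = |v-u₁| (and σ extended continuously to r = 0). -/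
open MeasureTheory Real

set_option maxHeartbeats 1000000
noncomputable section

/-- Linear upper and lower bounds for the collision frequency
`σ(v)`, given by the explicit formula in terms of `r = |v - u₁|` (extended
continuously at `r = 0`). -/
theorem collision_frequency_bounds
    (m₁ θ₁ μ : ℝ) (hm₁ : 0 < m₁) (hθ₁ : 0 < θ₁) (hμ : 0 < μ)
    (u₁ : EuclideanSpace ℝ (Fin 3))
    (σ : ℝ → ℝ)
    (hσ : ∀ r : ℝ, 0 < r →
      σ r = (2 * Real.pi / (2 + μ) ^ 2) * Real.sqrt (m₁ / (2 * Real.pi * θ₁)) *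
        ((4 * θ₁ / m₁) * Real.exp (-(m₁ / (2 * θ₁)) * r ^ 2)
          + (2 * r + 2 * θ₁ / (m₁ * r)) *
            ∫ t in (0 : ℝ)..(2 * r), Real.exp (-(m₁ / (8 * θ₁)) * t ^ 2)))
    (hσ0 : σ 0 = (8 / (2 + μ) ^ 2) * Real.sqrt (2 * Real.pi * θ₁ / m₁)) :
    ∃ ν₀ ν₁ : ℝ, 0 < ν₀ ∧ 0 < ν₁ ∧
      ∀ v : EuclideanSpace ℝ (Fin 3),
        ν₀ * (1 + ‖v - u₁‖) ≤ σ ‖v - u₁‖ ∧ σ ‖v - u₁‖ ≤ ν₁ * (1 + ‖v - u₁‖) := by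
  have hπ := Real.pi_pos
  have h2μ : (0:ℝ) < 2 + μ := by linarith
  have h2μ2 : (0:ℝ) < (2 + μ) ^ 2 := pow_pos h2μ 2
  set β := m₁ / (8 * θ₁) with hβdef
  have hβ : 0 < β := by positivity
  set α := m₁ / (2 * θ₁) with hαdef
  have hα : 0 < α := by positivity
  set c := (2 * Real.pi / (2 + μ) ^ 2) * Real.sqrt (m₁ / (2 * Real.pi * θ₁)) with hcdef
  have hc : 0 < c := by
    apply mul_pos (div_pos (by linarith) h2μ2)
    exact Real.sqrt_pos.mpr (by positivity)
  set A := 4 * θ₁ / m₁ with hAdef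
  have hA : 0 < A := by positivity
  set B := 2 * θ₁ / m₁ with hBdef
  have hB : 0 < B := by positivity
  set Iinf := ∫ x : ℝ, Real.exp (-β * x ^ 2) with hIinfdef
  have hIinf0 : 0 ≤ Iinf := integral_nonneg fun x => (Real.exp_pos _).le
  have hgint : Integrable fun x : ℝ => Real.exp (-β * x ^ 2) :=
    integrable_exp_neg_mul_sq hβ
  have hgii : ∀ a b : ℝ, IntervalIntegrable (fun x : ℝ => Real.exp (-β * x ^ 2)) volume a b :=
    fun a b => hgint.intervalIntegrable
  -- constant K : lower bound of the integral when r ≥ 1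
  set K := 2 * Real.exp (-β * 4) with hKdef
  have hK : 0 < K := by positivity
  set σ0 := (8 / (2 + μ) ^ 2) * Real.sqrt (2 * Real.pi * θ₁ / m₁) with hσ0def
  have hσ0pos : 0 < σ0 := by
    apply mul_pos (div_pos (by norm_num) h2μ2)
    exact Real.sqrt_pos.mpr (by positivity)
  clear_value c σ0 α β A B Iinf K
  refine ⟨min σ0 (min (c * A * Real.exp (-α) / 2) (c * K)),
    max σ0 (c * (A + 2 * B + 2 * Iinf)), ?_, ?_, ?_⟩
  · exact lt_min hσ0pos (lt_min (by positivity) (by positivity))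
  · exact lt_of_lt_of_le hσ0pos (le_max_left _ _)
  intro v
  set r := ‖v - u₁‖ with hrdef
  have hr0 : 0 ≤ r := norm_nonneg _
  rcases eq_or_lt_of_le hr0 with h0 | hr
  · rw [← h0, hσ0]
    constructor
    · simpa using min_le_left σ0 _
    · simpa using le_max_left σ0 (c * (A + 2 * B + 2 * Iinf))
  · rw [hσ r hr]
    set I := ∫ t in (0:ℝ)..(2*r), Real.exp (-β * t ^ 2) with hIdef
    have hI0 : 0 ≤ I := intervalIntegral.integral_nonneg (by linarith)
      (fun t _ => (Real.exp_pos _).le)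
    have hIle : I ≤ Iinf := by
      rw [hIdef, hIinfdef, intervalIntegral.integral_of_le (by linarith)]
      exact setIntegral_le_integral hgint
        (Filter.Eventually.of_forall fun x => (Real.exp_pos _).le)
    have hI2r : I ≤ 2 * r := by
      calc I ≤ ∫ _ in (0:ℝ)..(2*r), (1:ℝ) := by
              apply intervalIntegral.integral_mono_on (by linarith) (hgii 0 (2*r))
                intervalIntegrable_const
              intro x _
              exact Real.exp_le_one_iff.mpr (by nlinarith)
        _ = 2 * r := by simp
    have hE1 : Real.exp (-α * r ^ 2) ≤ 1 :=
      Real.exp_le_one_iff.mpr (by nlinarith)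
    clear_value I r
    constructor
    · -- lower bound
      rcases le_total r 1 with hr1 | hr1
      · -- small r : use the exponential term
        have hr2 : r ^ 2 ≤ 1 := by nlinarith
        have hE : Real.exp (-α) ≤ Real.exp (-α * r ^ 2) :=
          Real.exp_le_exp.mpr (by nlinarith [mul_le_mul_of_nonneg_left hr2 hα.le])
        have hrest : 0 ≤ (2 * r + 2 * θ₁ / (m₁ * r)) * I := by
          apply mul_nonneg _ hI0
          have : 0 < 2 * θ₁ / (m₁ * r) := by positivity
          linarith
        have hmain : c * A * Real.exp (-α) ≤
            c * (A * Real.exp (-α * r ^ 2) + (2 * r + 2 * θ₁ / (m₁ * r)) * I) := by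
          have h1 : A * Real.exp (-α) ≤ A * Real.exp (-α * r ^ 2) :=
            mul_le_mul_of_nonneg_left hE hA.le
          nlinarith
        have hν : min σ0 (min (c * A * Real.exp (-α) / 2) (c * K)) ≤
            c * A * Real.exp (-α) / 2 :=
          le_trans (min_le_right _ _) (min_le_left _ _)
        have hEpos : 0 < Real.exp (-α) := Real.exp_pos _
        nlinarith [mul_le_mul_of_nonneg_right hν (by linarith : (0:ℝ) ≤ 1 + r),
          mul_nonneg (by positivity : (0:ℝ) ≤ c * A * Real.exp (-α) / 2)
            (by linarith : (0:ℝ) ≤ 1 - r)]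
      · -- large r : use the integral term
        have hIK : K ≤ I := by
          have h2 : (∫ t in (0:ℝ)..(2:ℝ), Real.exp (-β * t ^ 2)) ≤ I := by
            rw [hIdef]
            apply intervalIntegral.integral_mono_interval le_rfl (by norm_num)
              (by linarith) _ (hgii 0 (2*r))
            exact Filter.Eventually.of_forall fun x => (Real.exp_pos _).le
          have h1 : K ≤ ∫ t in (0:ℝ)..(2:ℝ), Real.exp (-β * t ^ 2) := by
            have : (∫ _ in (0:ℝ)..(2:ℝ), Real.exp (-β * 4)) ≤
                ∫ t in (0:ℝ)..(2:ℝ), Real.exp (-β * t ^ 2) := by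
              apply intervalIntegral.integral_mono_on (by norm_num)
                intervalIntegrable_const (hgii 0 2)
              intro x hx
              apply Real.exp_le_exp.mpr
              have hx4 : x ^ 2 ≤ 4 := by nlinarith [hx.1, hx.2]
              nlinarith [mul_nonneg hβ.le (by linarith : (0:ℝ) ≤ 4 - x ^ 2)]
            simpa [hKdef, two_mul] using this
          linarith
        have hBr : 0 ≤ 2 * θ₁ / (m₁ * r) := by positivity
        have hEnn : 0 ≤ A * Real.exp (-α * r ^ 2) := by positivity
        have hmain : c * (2 * r) * K ≤
            c * (A * Real.exp (-α * r ^ 2) + (2 * r + 2 * θ₁ / (m₁ * r)) * I) := by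
          nlinarith [mul_le_mul_of_nonneg_left hIK (by linarith : (0:ℝ) ≤ 2 * r),
            mul_nonneg hBr hI0]
        have hν : min σ0 (min (c * A * Real.exp (-α) / 2) (c * K)) ≤ c * K :=
          le_trans (min_le_right _ _) (min_le_right _ _)
        have h1r : 1 + r ≤ 2 * r := by linarith
        nlinarith [mul_le_mul_of_nonneg_right hν (by linarith : (0:ℝ) ≤ 1 + r),
          mul_le_mul_of_nonneg_left h1r (mul_pos hc hK).le]
    · -- upper bound
      have hBrI : (2 * θ₁ / (m₁ * r)) * I ≤ 2 * B := by
        have hrpos : 0 < m₁ * r := by positivity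
        have h1 : (2 * θ₁ / (m₁ * r)) * I ≤ (2 * θ₁ / (m₁ * r)) * (2 * r) :=
          mul_le_mul_of_nonneg_left hI2r (by positivity)
        have h2 : (2 * θ₁ / (m₁ * r)) * (2 * r) = 2 * B := by
          rw [hBdef]; field_simp
        linarith
      have h2rI : (2 * r) * I ≤ (2 * r) * Iinf :=
        mul_le_mul_of_nonneg_left hIle (by linarith)
      have hE : A * Real.exp (-α * r ^ 2) ≤ A := by nlinarith
      have hM : c * (A + 2 * B + 2 * Iinf) ≤ max σ0 (c * (A + 2 * B + 2 * Iinf)) :=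
        le_max_right _ _
      have hmain : c * (A * Real.exp (-α * r ^ 2) + (2 * r + 2 * θ₁ / (m₁ * r)) * I)
          ≤ c * (A + 2 * B) + (c * (2 * Iinf)) * r := by
        have : A * Real.exp (-α * r ^ 2) + (2 * r + 2 * θ₁ / (m₁ * r)) * I
            ≤ A + 2 * B + 2 * Iinf * r := by nlinarith
        nlinarith
      have key : c * (A + 2 * B) + (c * (2 * Iinf)) * r
          ≤ (c * (A + 2 * B + 2 * Iinf)) * (1 + r) := by
        nlinarith [mul_nonneg (mul_nonneg hc.le hIinf0) hr.le,
          mul_nonneg (mul_nonneg hc.le (by linarith : (0:ℝ) ≤ A + 2 * B)) hr.le,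
          mul_nonneg hc.le hIinf0]
      calc c * (A * Real.exp (-α * r ^ 2) + (2 * r + 2 * θ₁ / (m₁ * r)) * I)
          ≤ c * (A + 2 * B) + (c * (2 * Iinf)) * r := hmain
        _ ≤ (c * (A + 2 * B + 2 * Iinf)) * (1 + r) := key
        _ ≤ max σ0 (c * (A + 2 * B + 2 * Iinf)) * (1 + r) :=
            mul_le_mul_of_nonneg_right hM (by linarith)

end
end

section
/- The infimum of the collision frequency is attained at v = u₁ and equals ν₀ = lim_{r→0⁺} σ(r) = (8/(2+μ)²)√(2πθ₁/m₁) > 0, where σ(r) = (2π/(2+μ)²)√(m₁/(2πθ₁))·[(4θ₁/m₁)exp(-(m₁/(2θ₁))r²) + (2r + 2θ₁/(m₁r))∫₀^{2r}exp(-(m₁/(8θ₁))t²)dt]. -/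
/-!
Substituting `a = m₁ / (8 θ₁)` gives `σ = c · h` with `c = (2π / (2+μ)²) √(m₁ / (2π θ₁))`
and `h(x) = e^{-4ax²} / (2a) + (2x + 1 / (4ax)) G(2x)`, `G(y) = ∫₀^y e^{-at²} dt`.
Since `G(2x) / (2x) → 1`, `h(x) → 1/(2a) + 1/(2a) = 1/a` as `x → 0⁺`. Moreover
`h'(x) = (2x e^{-4ax²} + (8ax² - 1) G(2x)) / (4ax²)`, and the numerator is positive: when
`8ax² ≥ 1` trivially, and otherwise `G(2x) ≤ 2x` and `e^{-4ax²} > 1 - 4ax²` bound it below by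
`8ax³`. So `h` increases on `(0, ∞)` and stays above its limit `1/a`.
-/

open MeasureTheory Real Filter Set Topology

noncomputable section

def gaussianPrimitive (a y : ℝ) : ℝ := ∫ t in (0 : ℝ)..y, exp (-a * t ^ 2)

def collisionProfile (a x : ℝ) : ℝ :=
  1 / (2 * a) * exp (-(4 * a) * x ^ 2) + (2 * x + 1 / (4 * a * x)) * gaussianPrimitive a (2 * x)

section gaussianPrimitive

variable {a y : ℝ}

theorem hasDerivAt_gaussianPrimitive (a y : ℝ) :
    HasDerivAt (gaussianPrimitive a) (exp (-a * y ^ 2)) y := by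
  have hc : Continuous fun t : ℝ => exp (-a * t ^ 2) := by fun_prop
  exact intervalIntegral.integral_hasDerivAt_right (hc.intervalIntegrable _ _)
    (hc.stronglyMeasurableAtFilter _ _) hc.continuousAt

theorem hasDerivAt_gaussianPrimitive_two_mul (a x : ℝ) :
    HasDerivAt (fun x => gaussianPrimitive a (2 * x)) (2 * exp (-(4 * a) * x ^ 2)) x := by
  have h := (hasDerivAt_gaussianPrimitive a (2 * x)).comp x ((hasDerivAt_id x).const_mul 2)
  exact h.congr_deriv (by ring_nf)

theorem gaussianPrimitive_zero (a : ℝ) : gaussianPrimitive a 0 = 0 :=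
  intervalIntegral.integral_same

theorem gaussianPrimitive_nonneg (a : ℝ) (hy : 0 ≤ y) : 0 ≤ gaussianPrimitive a y :=
  intervalIntegral.integral_nonneg hy fun _ _ => (exp_pos _).le

theorem gaussianPrimitive_le_self (ha : 0 ≤ a) (hy : 0 ≤ y) : gaussianPrimitive a y ≤ y := by
  have h : gaussianPrimitive a y ≤ ∫ _ in (0 : ℝ)..y, (1 : ℝ) :=
    intervalIntegral.integral_mono_on hy
      ((by fun_prop : Continuous fun t : ℝ => exp (-a * t ^ 2)).intervalIntegrable _ _)
      intervalIntegrable_const fun t _ => exp_le_one_iff.mpr (by nlinarith [sq_nonneg t])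
  simpa using h

@[fun_prop]
theorem continuous_gaussianPrimitive (a : ℝ) : Continuous (gaussianPrimitive a) :=
  continuous_iff_continuousAt.mpr fun y => (hasDerivAt_gaussianPrimitive a y).continuousAt

end gaussianPrimitive

section collisionProfile

variable {a x : ℝ}

theorem tendsto_collisionProfile (ha : 0 < a) :
    Tendsto (collisionProfile a) (𝓝[>] 0) (𝓝 a⁻¹) := by
  have hslope :
      Tendsto (fun x : ℝ => x⁻¹ * gaussianPrimitive a (2 * x)) (𝓝[>] 0) (𝓝 2) := by
    simpa [gaussianPrimitive_zero] using
      (hasDerivAt_gaussianPrimitive_two_mul a 0).tendsto_slope_zero_right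
  have hcont : Continuous fun x : ℝ =>
      1 / (2 * a) * exp (-(4 * a) * x ^ 2) + 2 * x * gaussianPrimitive a (2 * x) := by
    fun_prop
  have hlim :=
    ((hcont.tendsto 0).mono_left nhdsWithin_le_nhds).add (hslope.const_mul (1 / (4 * a)))
  convert hlim.congr' ?_ using 2
  · simp [gaussianPrimitive_zero]
    field_simp
    ring
  · filter_upwards [self_mem_nhdsWithin] with x (hx : 0 < x)
    simp only [collisionProfile]
    field_simp
    ring

theorem hasDerivAt_collisionProfile (ha : a ≠ 0) (hx : x ≠ 0) :
    HasDerivAt (collisionProfile a)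
      ((2 * x * exp (-(4 * a) * x ^ 2) + (8 * a * x ^ 2 - 1) * gaussianPrimitive a (2 * x)) /
        (4 * a * x ^ 2)) x := by
  have hexp : HasDerivAt (fun x : ℝ => exp (-(4 * a) * x ^ 2))
      (exp (-(4 * a) * x ^ 2) * (-(4 * a) * (2 * x))) x := by
    simpa using ((hasDerivAt_pow 2 x).const_mul (-(4 * a))).exp
  have hcoef : HasDerivAt (fun x : ℝ => 2 * x + 1 / (4 * a * x)) (2 - 1 / (4 * a * x ^ 2)) x := by
    have h := ((hasDerivAt_id' x).const_mul 2).fun_add ((hasDerivAt_const x (1 : ℝ)).fun_div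
      ((hasDerivAt_id' x).const_mul (4 * a)) (by simp [ha, hx]))
    refine h.congr_deriv ?_
    field_simp
    ring
  have h := (hexp.const_mul (1 / (2 * a))).add
    (hcoef.mul (hasDerivAt_gaussianPrimitive_two_mul a x))
  refine h.congr_deriv ?_
  field_simp
  ring

theorem collisionProfile_deriv_numerator_pos (ha : 0 < a) (hx : 0 < x) :
    0 < 2 * x * exp (-(4 * a) * x ^ 2) + (8 * a * x ^ 2 - 1) * gaussianPrimitive a (2 * x) := by
  have hG₀ := gaussianPrimitive_nonneg a (by positivity : 0 ≤ 2 * x)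
  rcases le_or_gt 1 (8 * a * x ^ 2) with hlarge | hsmall
  · exact add_pos_of_pos_of_nonneg (by positivity) (mul_nonneg (by linarith) hG₀)
  have hG := gaussianPrimitive_le_self ha.le (by positivity : 0 ≤ 2 * x)
  have hexp : 1 - 4 * a * x ^ 2 < exp (-(4 * a) * x ^ 2) := by
    linarith [add_one_lt_exp (x := -(4 * a) * x ^ 2)
      (mul_neg_of_neg_of_pos (by linarith) (by positivity)).ne]
  calc 0 < 2 * x * (4 * a * x ^ 2) := by positivity
    _ < 2 * x * (exp (-(4 * a) * x ^ 2) + 8 * a * x ^ 2 - 1) :=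
        mul_lt_mul_of_pos_left (by linarith) (by positivity)
    _ = 2 * x * exp (-(4 * a) * x ^ 2) + (8 * a * x ^ 2 - 1) * (2 * x) := by ring
    _ ≤ _ := by linarith [mul_le_mul_of_nonpos_left hG (by linarith : 8 * a * x ^ 2 - 1 ≤ 0)]

theorem strictMonoOn_collisionProfile (ha : 0 < a) : StrictMonoOn (collisionProfile a) (Ioi 0) := by
  have hderiv (x : ℝ) (hx : 0 < x) := hasDerivAt_collisionProfile ha.ne' (ne_of_gt hx)
  refine strictMonoOn_of_deriv_pos (convex_Ioi 0)
    (fun x hx => (hderiv x hx).continuousAt.continuousWithinAt) fun x hx => ?_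
  rw [interior_Ioi, mem_Ioi] at hx
  rw [(hderiv x hx).deriv]
  exact div_pos (collisionProfile_deriv_numerator_pos ha hx) (by positivity)

theorem inv_le_collisionProfile (ha : 0 < a) (hx : 0 < x) : a⁻¹ ≤ collisionProfile a x := by
  refine le_of_tendsto (tendsto_collisionProfile ha) ?_
  filter_upwards [Ioc_mem_nhdsGT hx] with y hy
  exact (strictMonoOn_collisionProfile ha).monotoneOn hy.1 hx hy.2

end collisionProfile

/-- The collision frequency attains its infimum at `v = u₁`:
`lim_{r→0⁺} σ(r) = (8/(2+μ)²)√(2πθ₁/m₁)` and `σ(r)` is at least this value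
for every `r > 0`. -/
theorem collision_frequency_infimum
    (m₁ θ₁ μ : ℝ) (hm₁ : 0 < m₁) (hθ₁ : 0 < θ₁) (hμ : 0 < μ)
    (σ : ℝ → ℝ)
    (hσ : ∀ r : ℝ, 0 < r →
      σ r = (2 * Real.pi / (2 + μ) ^ 2) * Real.sqrt (m₁ / (2 * Real.pi * θ₁)) *
        ((4 * θ₁ / m₁) * Real.exp (-(m₁ / (2 * θ₁)) * r ^ 2)
          + (2 * r + 2 * θ₁ / (m₁ * r)) *
            ∫ t in (0 : ℝ)..(2 * r), Real.exp (-(m₁ / (8 * θ₁)) * t ^ 2))) :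
    Filter.Tendsto σ (nhdsWithin 0 (Set.Ioi 0))
        (nhds ((8 / (2 + μ) ^ 2) * Real.sqrt (2 * Real.pi * θ₁ / m₁)))
      ∧ (0 < (8 / (2 + μ) ^ 2) * Real.sqrt (2 * Real.pi * θ₁ / m₁))
      ∧ ∀ r : ℝ, 0 < r →
          (8 / (2 + μ) ^ 2) * Real.sqrt (2 * Real.pi * θ₁ / m₁) ≤ σ r := by
  have ha : 0 < m₁ / (8 * θ₁) := by positivity
  have hσ_eq : ∀ r, 0 < r → σ r = (2 * π / (2 + μ) ^ 2) * √(m₁ / (2 * π * θ₁)) *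
      collisionProfile (m₁ / (8 * θ₁)) r := fun r hr => by
    have h₁ : 4 * θ₁ / m₁ = 1 / (2 * (m₁ / (8 * θ₁))) := by field_simp; ring
    have h₂ : m₁ / (2 * θ₁) = 4 * (m₁ / (8 * θ₁)) := by field_simp; ring
    have h₃ : 2 * θ₁ / (m₁ * r) = 1 / (4 * (m₁ / (8 * θ₁)) * r) := by field_simp; ring
    rw [hσ r hr, h₁, h₂, h₃]
    rfl
  have hlim : (2 * π / (2 + μ) ^ 2) * √(m₁ / (2 * π * θ₁)) * (m₁ / (8 * θ₁))⁻¹ =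
      8 / (2 + μ) ^ 2 * √(2 * π * θ₁ / m₁) := by
    rw [← inv_div (2 * π * θ₁), sqrt_inv]
    field_simp
    rw [sq_sqrt (by positivity)]
    field_simp
  refine ⟨?_, by positivity, fun r hr => ?_⟩
  · rw [← hlim]
    refine ((tendsto_collisionProfile ha).const_mul _).congr' ?_
    filter_upwards [self_mem_nhdsWithin] with r hr
    exact (hσ_eq r hr).symm
  · rw [← hlim, hσ_eq r hr]
    exact mul_le_mul_of_nonneg_left (inv_le_collisionProfile ha hr) (by positivity)
end
end
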